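/- arXiv:2306.02635 — 6 statements merged into one kernel-verified Lean document; each statement's English description precedes it below -/
import Mathlib

section
/- Let p be an odd prime and ζ a primitive fifth root of unity. For u, v ∈ ℤ_p and any nonnegative integer k with k ≤ ⟨-u⟩_p (the least nonnegative residue of -u mod p), the product of Pochhammer symbols (u+vp)_k (u+vpζ)_k (u+vpζ²)_k (u+vpζ³)_k (u+vpζ⁴)_k is congruent to (u)_k⁵ · (1 + v⁵p⁵ · Σ_{j=0}^{k-1} 1/(u+j)⁵) modulo p⁶. -/
/-!
Writing `(x)_k = ∏_{j<k} (x + j)` and exchanging the two products, the identity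
`∏_{i<5} (X + Y ζ^i) = X^5 + Y^5` turns the left-hand side into `∏_{j<k} ((u + j)^5 + w)` with
`w = (vp)^5`. Expanding this product to first order in `w` gives
`(u)_k^5 (1 + w Σ_{j<k} (u + j)^{-5})` up to a multiple of `w^2`, and `p^6 ∣ p^10 ∣ w^2`.
The hypothesis `k ≤ ⟨-u⟩_p` makes every `u + j` with `j < k` a unit, which the expansion needs.
-/

open Finset Polynomial

theorem ascPochhammer_eval_eq_prod_range {S : Type*} [CommSemiring S] (k : ℕ) (x : S) :
    (ascPochhammer S k).eval x = ∏ j ∈ range k, (x + j) := by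
  induction k with
  | zero => simp
  | succ k ih => rw [ascPochhammer_succ_eval, prod_range_succ, ih]

namespace IsPrimitiveRoot

variable {R : Type*} [CommRing R] [IsDomain R] {ζ : R} {n : ℕ}

theorem nthRootsFinset_eq_image_range [DecidableEq R] (hζ : IsPrimitiveRoot ζ n) (hn : 0 < n) :
    nthRootsFinset n (1 : R) = (range n).image (ζ ^ ·) := by
  refine (eq_of_subset_of_card_le (fun x hx => ?_) ?_).symm
  · obtain ⟨i, -, rfl⟩ := mem_image.mp hx
    rw [Polynomial.mem_nthRootsFinset hn, ← pow_mul, mul_comm, pow_mul, hζ.pow_eq_one, one_pow]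
  · rw [hζ.card_nthRootsFinset, card_image_of_injOn, card_range]
    exact fun a ha b hb => hζ.pow_inj (mem_range.mp ha) (mem_range.mp hb)

theorem prod_range_add_mul_pow (hζ : IsPrimitiveRoot ζ n) (hn : Odd n) (x y : R) :
    ∏ i ∈ range n, (x + y * ζ ^ i) = x ^ n + y ^ n := by
  classical
  rw [hζ.pow_add_pow_eq_prod_add_mul x y hn, hζ.nthRootsFinset_eq_image_range hn.pos,
    prod_image fun a ha b hb => hζ.pow_inj (mem_range.mp ha) (mem_range.mp hb)]
  exact prod_congr rfl fun i _ => by ring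

theorem prod_range_ascPochhammer_eval_add_mul (hζ : IsPrimitiveRoot ζ n) (hn : Odd n)
    (k : ℕ) (x y : R) :
    ∏ i ∈ range n, (ascPochhammer R k).eval (x + y * ζ ^ i) =
      ∏ j ∈ range k, ((x + j) ^ n + y ^ n) := by
  simp_rw [ascPochhammer_eval_eq_prod_range]
  rw [prod_comm]
  refine prod_congr rfl fun j _ => ?_
  rw [← hζ.prod_range_add_mul_pow hn]
  exact prod_congr rfl fun i _ => by ring

end IsPrimitiveRoot

section PerturbedProduct

variable {S : Type*} [CommRing S] (a : ℕ → S) (w : S)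

theorem dvd_prod_add_sub_prod {ι : Type*} (s : Finset ι) (b : ι → S) :
    w ∣ ∏ j ∈ s, (b j + w) - ∏ j ∈ s, b j := by
  rw [← Ideal.mem_span_singleton, ← Ideal.Quotient.eq]
  simp [map_prod, Ideal.Quotient.mk_singleton_self]

theorem sq_dvd_prod_range_add_sub_first_order {k : ℕ} (ha : ∀ j < k, IsUnit (a j)) :
    w ^ 2 ∣ ∏ j ∈ range k, (a j + w) -
      (∏ j ∈ range k, a j) * (1 + w * ∑ j ∈ range k, Ring.inverse (a j)) := by
  induction k with
  | zero => simp
  | succ k ih =>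
    have ih := ih fun j hj => ha j (hj.trans k.lt_succ_self)
    have hinv : a k * Ring.inverse (a k) = 1 := Ring.mul_inverse_cancel _ (ha k k.lt_succ_self)
    rw [prod_range_succ, prod_range_succ, sum_range_succ]
    set P := ∏ j ∈ range k, (a j + w)
    set Q := ∏ j ∈ range k, a j
    set T := ∑ j ∈ range k, Ring.inverse (a j)
    have h : P * (a k + w) - Q * a k * (1 + w * (T + Ring.inverse (a k))) =
        (P - Q * (1 + w * T)) * a k + w * (P - Q) := by
      linear_combination (-(w * Q)) * hinv
    rw [h]
    refine dvd_add (ih.mul_right _) ?_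
    rw [sq]
    exact mul_dvd_mul_left w (dvd_prod_add_sub_prod w (range k) a)

end PerturbedProduct

namespace PadicInt

variable {p : ℕ} [Fact p.Prime]

theorem isUnit_add_natCast_of_lt_appr {u : ℤ_[p]} {j : ℕ} (hj : j < (-u).appr 1) :
    IsUnit (u + (j : ℤ_[p])) := by
  set m := (-u).appr 1
  have hm : m < p := by simpa using appr_lt (-u) 1
  have hum : toZMod (-u) = m := by
    have h := appr_spec 1 (-u)
    rwa [pow_one, ← maximalIdeal_eq_span_p, ← ker_toZMod, RingHom.mem_ker, map_sub,
      map_natCast, sub_eq_zero] at h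
  by_contra h
  have h0 : toZMod (u + (j : ℤ_[p])) = 0 := by
    rwa [← RingHom.mem_ker, ker_toZMod, IsLocalRing.mem_maximalIdeal, mem_nonunits_iff]
  have hdvd : ((m - j : ℕ) : ZMod p) = -toZMod (u + (j : ℤ_[p])) := by
    rw [Nat.cast_sub hj.le, ← hum, map_neg, map_add, map_natCast]
    ring
  rw [h0, neg_zero, ZMod.natCast_eq_zero_iff] at hdvd
  have := Nat.le_of_dvd (by omega) hdvd
  omega

end PadicInt

theorem stmt1_general (p : ℕ) [Fact p.Prime]
    (R : Type*) [CommRing R] [IsDomain R] [Algebra (PadicInt p) R]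
    (ζ : R) (hζ : IsPrimitiveRoot ζ 5)
    (u v : PadicInt p) (k : ℕ) (hk : k ≤ (-u).appr 1) :
    (p : R) ^ 6 ∣
      (∏ i ∈ Finset.range 5,
        (ascPochhammer R k).eval
          (algebraMap (PadicInt p) R u + algebraMap (PadicInt p) R (v * p) * ζ ^ i)) -
      algebraMap (PadicInt p) R
        (((ascPochhammer (PadicInt p) k).eval u) ^ 5 *
          (1 + v ^ 5 * (p : PadicInt p) ^ 5 *
            ∑ j ∈ Finset.range k, Ring.inverse ((u + (j : PadicInt p)) ^ 5))) := by
  have hunit : ∀ j < k, IsUnit ((u + (j : ℤ_[p])) ^ 5) := fun j hj =>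
    (PadicInt.isUnit_add_natCast_of_lt_appr (hj.trans_le hk)).pow 5
  have hpadic : (p : ℤ_[p]) ^ 6 ∣ ∏ j ∈ range k, ((u + j) ^ 5 + (v * p) ^ 5) -
      ((ascPochhammer ℤ_[p] k).eval u) ^ 5 *
        (1 + v ^ 5 * (p : ℤ_[p]) ^ 5 * ∑ j ∈ range k, Ring.inverse ((u + (j : ℤ_[p])) ^ 5)) := by
    have h := sq_dvd_prod_range_add_sub_first_order (fun j => (u + (j : ℤ_[p])) ^ 5)
      ((v * p) ^ 5) hunit
    rw [ascPochhammer_eval_eq_prod_range, ← prod_pow, ← mul_pow]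
    exact (Dvd.intro (v ^ 10 * (p : ℤ_[p]) ^ 4) (by ring)).trans h
  set φ := algebraMap ℤ_[p] R
  have hmap : ∏ j ∈ range k, ((φ u + j) ^ 5 + φ (v * p) ^ 5) =
      φ (∏ j ∈ range k, ((u + j) ^ 5 + (v * p) ^ 5)) := by
    simp only [map_prod, map_add, map_pow, map_natCast]
  rw [hζ.prod_range_ascPochhammer_eval_add_mul (by decide), hmap, ← map_sub]
  obtain ⟨c, hc⟩ := hpadic
  exact ⟨φ c, by rw [hc, map_mul, map_pow, map_natCast]⟩

/-- For an odd prime `p`, a primitive fifth root of unity `ζ`, `u, v ∈ ℤ_p` and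
`k ≤ ⟨-u⟩_p`, the product `(u+vp)_k (u+vpζ)_k (u+vpζ²)_k (u+vpζ³)_k (u+vpζ⁴)_k` is congruent to
`(u)_k⁵ (1 + v⁵p⁵ Σ_{j=0}^{k-1} 1/(u+j)⁵)` modulo `p⁶`. -/
theorem stmt1 (p : ℕ) [Fact p.Prime] (hp : Odd p)
    (R : Type*) [CommRing R] [IsDomain R] [Algebra (PadicInt p) R]
    (ζ : R) (hζ : IsPrimitiveRoot ζ 5)
    (u v : PadicInt p) (k : ℕ) (hk : k ≤ (-u).appr 1) :
    (p : R) ^ 6 ∣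
      (∏ i ∈ Finset.range 5,
        (ascPochhammer R k).eval
          (algebraMap (PadicInt p) R u + algebraMap (PadicInt p) R (v * p) * ζ ^ i)) -
      algebraMap (PadicInt p) R
        (((ascPochhammer (PadicInt p) k).eval u) ^ 5 *
          (1 + v ^ 5 * (p : PadicInt p) ^ 5 *
            ∑ j ∈ Finset.range k, Ring.inverse ((u + (j : PadicInt p)) ^ 5))) :=
  stmt1_general p R ζ hζ u v k hk
end

section
/- Let r ≤ 1 be an integer coprime with 3 and let p > 3 be a prime with p ≡ -r (mod 3) and p ≥ 3 - r. Then Σ_{k=0}^{(2p-r)/3} (6k+r) · ((r/3)_k)⁶/((1)_k)⁶ · ( Σ_{j=0}^{k-1} 1/(r/3+j)⁵ + Σ_{j=1}^{k} 1/j⁵ ) ≡ 0 (mod p) in ℤ_p. -/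
/-!
Reduce modulo `p`. Since `3n = 2p - r`, the image of `x = r/3` in `ZMod p` is `-n`, and `n < p`,
so `(x)_k / (1)_k ≡ (-1)^k C(n, k)` for `k ≤ n`. Under `k ↦ n - k` the binomial coefficient is
unchanged, so is the harmonic factor (the fifth power is odd), while `6k + r ≡ 6k - 3n` changes sign.
The reduced sum is therefore its own negative, hence zero as `p ≠ 2`.
-/

open Finset Polynomial Nat

theorem map_ringInverse {F M₀ N₀ : Type*} [MonoidWithZero M₀] [MonoidWithZero N₀]
    [FunLike F M₀ N₀] [MonoidWithZeroHomClass F M₀ N₀] (f : F) [IsLocalHom f] (a : M₀) :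
    f (Ring.inverse a) = Ring.inverse (f a) := by
  by_cases ha : IsUnit a
  · obtain ⟨u, rfl⟩ := ha
    rw [Ring.inverse_unit]
    exact (Ring.inverse_unit (Units.map (f : M₀ →* N₀) u)).symm
  · rw [Ring.inverse_non_unit a ha, Ring.inverse_non_unit _ (mt (isUnit_map_iff f a).mp ha),
      map_zero]

theorem PadicInt.natCast_dvd_iff_toZMod_eq_zero {p : ℕ} [Fact p.Prime] (a : ℤ_[p]) :
    (p : ℤ_[p]) ∣ a ↔ PadicInt.toZMod a = 0 := by
  rw [← Ideal.mem_span_singleton, ← maximalIdeal_eq_span_p, ← ker_toZMod, RingHom.mem_ker]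

theorem Finset.sum_range_eq_zero_of_reflect {R : Type*} [Ring R] [NoZeroDivisors R]
    (h2 : (2 : R) ≠ 0) {f : ℕ → R} {n : ℕ} (hf : ∀ k ≤ n, f (n - k) = -f k) :
    ∑ k ∈ range (n + 1), f k = 0 := by
  have hneg : ∑ k ∈ range (n + 1), f k = -∑ k ∈ range (n + 1), f k :=
    calc ∑ k ∈ range (n + 1), f k = ∑ k ∈ range (n + 1), f (n + 1 - 1 - k) :=
          (sum_range_reflect f (n + 1)).symm
      _ = ∑ k ∈ range (n + 1), -f k :=
          sum_congr rfl fun k hk => hf k (Nat.lt_succ_iff.mp (mem_range.mp hk))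
      _ = _ := sum_neg_distrib f
  have h2S : (2 : R) * ∑ k ∈ range (n + 1), f k = 0 := by
    rw [two_mul]
    nth_rewrite 1 [hneg]
    exact neg_add_cancel _
  exact (mul_eq_zero.mp h2S).resolve_left h2

section OddFunction

variable {R M : Type*} [Ring R] [AddCommGroup M] {g : R → M}

theorem sum_range_neg_natCast_add_eq_neg_sum_Ioc (hg : ∀ a, g (-a) = -g a) {m n : ℕ}
    (hmn : m ≤ n) : ∑ j ∈ range m, g (-(n : R) + j) = -∑ i ∈ Ioc (n - m) n, g (i : R) := by
  rw [← sum_neg_distrib]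
  refine sum_nbij' (n - ·) (n - ·) ?_ ?_ ?_ ?_ fun j hj => ?_
  · intro j hj; simp only [mem_range, mem_Ioc] at hj ⊢; omega
  · intro i hi; simp only [mem_range, mem_Ioc] at hi ⊢; omega
  · intro j hj; simp only [mem_range] at hj; omega
  · intro i hi; simp only [mem_Ioc] at hi; omega
  · rw [mem_range] at hj
    rw [Nat.cast_sub (by omega), ← hg, neg_sub, sub_eq_neg_add]

theorem sum_range_add_sum_Icc_reflect (hg : ∀ a, g (-a) = -g a) {m n : ℕ} (hmn : m ≤ n) :
    ∑ j ∈ range (n - m), g (-(n : R) + j) + ∑ j ∈ Icc 1 (n - m), g (j : R) =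
      ∑ j ∈ range m, g (-(n : R) + j) + ∑ j ∈ Icc 1 m, g (j : R) := by
  have hIcc : ∀ k, Icc 1 k = Ioc 0 k := fun k => Icc_add_one_left_eq_Ioc 0 k
  rw [sum_range_neg_natCast_add_eq_neg_sum_Ioc hg hmn,
    sum_range_neg_natCast_add_eq_neg_sum_Ioc hg (n.sub_le m), Nat.sub_sub_self hmn, hIcc, hIcc,
    neg_add_eq_sub, neg_add_eq_sub, sub_eq_sub_iff_add_eq_add]
  exact (sum_Ioc_consecutive _ (zero_le _) (n.sub_le m)).trans
    (sum_Ioc_consecutive _ (zero_le m) hmn).symm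

end OddFunction

theorem ascPochhammer_eval_neg_natCast {R : Type*} [CommRing R] (n k : ℕ) :
    (ascPochhammer R k).eval (-(n : R)) = (-1) ^ k * (k ! * n.choose k : ℕ) := by
  rw [ascPochhammer_eval_neg_eq_descPochhammer, descPochhammer_eval_eq_descFactorial,
    descFactorial_eq_factorial_mul_choose]

section Summand

variable {K : Type*} [Field K]

noncomputable def summand (r y : K) (k : ℕ) : K :=
  (6 * (k : K) + r) * ((ascPochhammer K k).eval y) ^ 6 * ((ascPochhammer K k).eval 1)⁻¹ ^ 6 *
    ((∑ j ∈ range k, (y + (j : K))⁻¹ ^ 5) + ∑ j ∈ Icc 1 k, ((j : K))⁻¹ ^ 5)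

theorem summand_neg_natCast {n k : ℕ} (hk : (k ! : K) ≠ 0) :
    summand (-3 * (n : K)) (-(n : K)) k = (6 * k - 3 * n) * (n.choose k : K) ^ 6 *
      ((∑ j ∈ range k, (-(n : K) + j)⁻¹ ^ 5) + ∑ j ∈ Icc 1 k, ((j : K))⁻¹ ^ 5) := by
  have hsign : ((-1 : K) ^ k) ^ 6 = 1 := by
    rw [← pow_mul]
    exact Even.neg_one_pow ⟨3 * k, by ring⟩
  have hratio : ((-1) ^ k * ((k ! * n.choose k : ℕ) : K)) ^ 6 * ((k ! : ℕ) : K)⁻¹ ^ 6 =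
      (n.choose k : K) ^ 6 := by
    rw [Nat.cast_mul, show ∀ a b c d : K, (a * (b * c)) ^ 6 * d ^ 6 = a ^ 6 * c ^ 6 * (b * d) ^ 6
      from fun _ _ _ _ => by ring, hsign, mul_inv_cancel₀ hk, one_pow, one_mul, mul_one]
  rw [summand, ascPochhammer_eval_neg_natCast, ascPochhammer_eval_one, mul_assoc (_ + _), hratio]
  ring

theorem summand_neg_natCast_reflect {n k : ℕ} (hn : (n ! : K) ≠ 0) (hk : k ≤ n) :
    summand (-3 * (n : K)) (-(n : K)) (n - k) = -summand (-3 * (n : K)) (-(n : K)) k := by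
  have hfac : ∀ i ≤ n, (i ! : K) ≠ 0 := fun i hi =>
    ne_zero_of_dvd_ne_zero hn (Nat.cast_dvd_cast (factorial_dvd_factorial hi))
  have hodd : ∀ a : K, (-a)⁻¹ ^ 5 = -a⁻¹ ^ 5 := fun a => by rw [inv_neg, Odd.neg_pow (by decide)]
  have hH := sum_range_add_sum_Icc_reflect (g := fun a : K => a⁻¹ ^ 5) hodd hk
  beta_reduce at hH
  rw [summand_neg_natCast (hfac _ (n.sub_le k)), summand_neg_natCast (hfac k hk), choose_symm hk,
    hH, Nat.cast_sub hk]
  ring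

end Summand

theorem stmt3_general (p : ℕ) [Fact p.Prime] (hp3 : 3 < p)
    (r : ℤ) (hpge : 3 - r ≤ (p : ℤ))
    (n : ℕ) (hn : (n : ℤ) * 3 = 2 * p - r)
    (x : PadicInt p) (hx : 3 * x = (r : PadicInt p)) :
    (p : PadicInt p) ∣
      ∑ k ∈ Finset.range (n + 1),
        (6 * (k : PadicInt p) + (r : PadicInt p)) *
          ((ascPochhammer (PadicInt p) k).eval x) ^ 6 *
          (Ring.inverse ((ascPochhammer (PadicInt p) k).eval 1)) ^ 6 *
          ((∑ j ∈ Finset.range k, Ring.inverse (x + (j : PadicInt p)) ^ 5) +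
            ∑ j ∈ Finset.Icc 1 k, Ring.inverse ((j : PadicInt p)) ^ 5) := by
  have hsmall : ∀ m, 0 < m → m < p → (m : ZMod p) ≠ 0 := fun m hm hmp hdvd =>
    absurd (Nat.le_of_dvd hm ((ZMod.natCast_eq_zero_iff m p).mp hdvd)) (by omega)
  have hnp : n < p := by omega
  have hfac : (n ! : ZMod p) ≠ 0 := by
    rw [Ne, ZMod.natCast_eq_zero_iff, Nat.Prime.dvd_factorial Fact.out]
    omega
  have hr : (r : ZMod p) = -3 * n := by
    have hn' := congrArg (Int.cast : ℤ → ZMod p) hn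
    push_cast [ZMod.natCast_self] at hn'
    linear_combination hn'
  have hxn : PadicInt.toZMod x = -n := by
    have h3x := congrArg PadicInt.toZMod hx
    rw [map_mul, map_ofNat, map_intCast, hr] at h3x
    exact mul_left_cancel₀ (by exact_mod_cast hsmall 3 (by norm_num) hp3)
      (by linear_combination h3x)
  rw [PadicInt.natCast_dvd_iff_toZMod_eq_zero, map_sum]
  simp only [map_mul, map_add, map_pow, map_sum, map_natCast, map_intCast, map_ofNat, map_one,
    ← eval_map_apply, ascPochhammer_map, map_ringInverse, Ring.inverse_eq_inv, hxn, hr]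
  exact sum_range_eq_zero_of_reflect (by exact_mod_cast hsmall 2 (by norm_num) (by omega))
    fun k hk => summand_neg_natCast_reflect hfac hk

/-- Lemma 2.5: Under the hypotheses of Theorem 1.1, with `n = (2p-r)/3` and
`x = r/3 ∈ ℤ_p`,
`Σ_{k=0}^{n} (6k+r) (r/3)_k⁶/(1)_k⁶ (Σ_{j=0}^{k-1} 1/(r/3+j)⁵ + Σ_{j=1}^{k} 1/j⁵) ≡ 0 (mod p)`. -/
theorem stmt3 (p : ℕ) [Fact p.Prime] (hp3 : 3 < p)
    (r : ℤ) (hr : r ≤ 1) (hr3 : IsCoprime r 3)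
    (hpr : (p : ℤ) ≡ -r [ZMOD 3]) (hpge : 3 - r ≤ (p : ℤ))
    (n : ℕ) (hn : (n : ℤ) * 3 = 2 * p - r)
    (x : PadicInt p) (hx : 3 * x = (r : PadicInt p)) :
    (p : PadicInt p) ∣
      ∑ k ∈ Finset.range (n + 1),
        (6 * (k : PadicInt p) + (r : PadicInt p)) *
          ((ascPochhammer (PadicInt p) k).eval x) ^ 6 *
          (Ring.inverse ((ascPochhammer (PadicInt p) k).eval 1)) ^ 6 *
          ((∑ j ∈ Finset.range k, Ring.inverse (x + (j : PadicInt p)) ^ 5) +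
            ∑ j ∈ Finset.Icc 1 k, Ring.inverse ((j : PadicInt p)) ^ 5) :=
  stmt3_general p hp3 r hpge n hn x hx
end

section
/- Let r ≤ 1 be an integer coprime with 3. Then the exact identity Σ_{k=0}^{1-r} ((r-1)_k (r/3)_k³)/((1)_k (2r/3)_k³) · ( Σ_{j=0}^{k-1} 1/(2r/3+j) - Σ_{j=0}^{k-1} 1/(r/3+j) ) = ( Σ_{j=0}^{-r} 1/(2r/3+j) ) · Σ_{k=0}^{1-r} ((r-1)_k (r/3)_k³)/((1)_k (2r/3)_k³) holds in ℚ. -/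
/-!
Write `n = 1 - r`, `a = r/3`, `b = 2r/3`, so that `a + b = 1 - n` and the first Pochhammer
parameter is `r - 1 = -n`. Under `k ↦ n - k` the reflection formula
`(a)_{n-k} (b)_k = (-1)^{n-k} (b)_n` makes each ratio `(x)_k/(y)_k` with `x + y = 1 - n` pick up
the sign `(-1)^n`, so the summand (a product of four such ratios) is invariant, while the
harmonic difference `H_k = Σ_{j<k} 1/(b+j) - Σ_{j<k} 1/(a+j)` is sent to `2 H_n - H_k`.
Averaging the sum with its reflection gives the identity.
-/

open Finset Polynomial

theorem neg_one_pow_sq {M : Type*} [Monoid M] [HasDistribNeg M] (m : ℕ) :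
    ((-1 : M) ^ m) ^ 2 = 1 := by
  rw [← pow_mul, mul_comm, pow_mul, neg_one_sq, one_pow]

section Pochhammer

variable {R : Type*} [CommRing R]

theorem ascPochhammer_eval_add (x : R) (k m : ℕ) :
    (ascPochhammer R (k + m)).eval x =
      (ascPochhammer R k).eval x * (ascPochhammer R m).eval (x + k) := by
  rw [← ascPochhammer_mul, eval_mul, eval_comp, eval_add, eval_X, eval_natCast]

theorem ascPochhammer_eval_neg (x : R) (m : ℕ) :
    (ascPochhammer R m).eval (-x) = (-1) ^ m * (ascPochhammer R m).eval (x - m + 1) := by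
  rw [ascPochhammer_eval_neg_eq_descPochhammer, descPochhammer_eval_eq_ascPochhammer]

theorem ascPochhammer_eval_mul_reflect {a b : R} {n : ℕ} (hab : a + b = 1 - n) {k : ℕ}
    (hk : k ≤ n) :
    (ascPochhammer R (n - k)).eval a * (ascPochhammer R k).eval b =
      (-1) ^ (n - k) * (ascPochhammer R n).eval b := by
  have ha : a = -(b + k) - ↑(n - k) + 1 := by
    rw [Nat.cast_sub hk]
    linear_combination hab
  have hsplit := ascPochhammer_eval_add b k (n - k)
  rw [Nat.add_sub_cancel' hk] at hsplit
  have hrefl := ascPochhammer_eval_neg (-(b + k)) (n - k)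
  rw [neg_neg] at hrefl
  rw [hsplit, hrefl, ← ha]
  linear_combination -((ascPochhammer R (n - k)).eval a * (ascPochhammer R k).eval b) *
    neg_one_pow_sq (M := R) (n - k)

theorem ascPochhammer_eval_ne_zero_of_le {x : R} {k n : ℕ} (hk : k ≤ n)
    (hx : (ascPochhammer R n).eval x ≠ 0) : (ascPochhammer R k).eval x ≠ 0 := by
  rw [← Nat.add_sub_cancel' hk, ascPochhammer_eval_add] at hx
  exact left_ne_zero_of_mul hx

end Pochhammer

theorem ascPochhammer_eval_div_reflect {K : Type*} [Field K] {a b : K} {n : ℕ}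
    (hab : a + b = 1 - n) (hb : (ascPochhammer K n).eval b ≠ 0) {k : ℕ} (hk : k ≤ n) :
    (ascPochhammer K (n - k)).eval a / (ascPochhammer K (n - k)).eval b =
      (-1) ^ n * ((ascPochhammer K k).eval a / (ascPochhammer K k).eval b) := by
  have hba : b + a = 1 - n := by rwa [add_comm]
  have hAB := ascPochhammer_eval_mul_reflect hab hk
  have hBA := ascPochhammer_eval_mul_reflect hba hk
  have hAn := ascPochhammer_eval_mul_reflect hab (Nat.zero_le n)
  simp only [Nat.sub_zero, ascPochhammer_zero, eval_one, mul_one] at hAn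
  have hbk := ascPochhammer_eval_ne_zero_of_le hk hb
  have hbnk := ascPochhammer_eval_ne_zero_of_le (Nat.sub_le n k) hb
  rw [div_eq_iff hbnk, mul_comm, ← mul_assoc, mul_div_assoc', eq_div_iff hbk]
  linear_combination hAB - (-1 : K) ^ n * hBA - (-1 : K) ^ n * (-1 : K) ^ (n - k) * hAn
    - (-1 : K) ^ (n - k) * (ascPochhammer K n).eval b * neg_one_pow_sq (M := K) n

section Harmonic

variable {K : Type*} [Field K]

/-- The logarithmic derivative of `x ↦ (x)_k`. -/
def shiftedHarmonic (x : K) (k : ℕ) : K :=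
  ∑ j ∈ range k, 1 / (x + j)

@[simp]
theorem shiftedHarmonic_zero (x : K) : shiftedHarmonic x 0 = 0 :=
  sum_range_zero _

theorem shiftedHarmonic_add (x : K) (k m : ℕ) :
    shiftedHarmonic x (k + m) = shiftedHarmonic x k + shiftedHarmonic (x + k) m := by
  simp only [shiftedHarmonic, sum_range_add, Nat.cast_add, add_assoc]

theorem shiftedHarmonic_neg (x : K) (m : ℕ) :
    shiftedHarmonic (-x) m = -shiftedHarmonic (x - m + 1) m := by
  rw [shiftedHarmonic, shiftedHarmonic, ← sum_range_reflect, ← sum_neg_distrib]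
  refine sum_congr rfl fun j hj => ?_
  have hjm : j < m := mem_range.mp hj
  have hden : -x + ((m - 1 - j : ℕ) : K) = -(x - m + 1 + j) := by
    rw [Nat.cast_sub (by omega), Nat.cast_sub (by omega : 1 ≤ m)]
    push_cast
    ring
  rw [hden, div_neg]

theorem shiftedHarmonic_reflect {a b : K} {n : ℕ} (hab : a + b = 1 - n) {k : ℕ} (hk : k ≤ n) :
    shiftedHarmonic a (n - k) = shiftedHarmonic b k - shiftedHarmonic b n := by
  have ha : a = -(b + k) - ↑(n - k) + 1 := by
    rw [Nat.cast_sub hk]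
    linear_combination hab
  have hsplit := shiftedHarmonic_add b k (n - k)
  rw [Nat.add_sub_cancel' hk] at hsplit
  have hrefl := shiftedHarmonic_neg (-(b + k)) (n - k)
  rw [neg_neg, ← ha] at hrefl
  rw [hsplit, hrefl]
  ring

end Harmonic

section Symmetrization

variable {K : Type*} [Field K] [CharZero K]

theorem sum_range_mul_eq_of_reflect {T H : ℕ → K} {n : ℕ} {C : K}
    (hT : ∀ k ≤ n, T (n - k) = T k) (hH : ∀ k ≤ n, H (n - k) = 2 * C - H k) :
    ∑ k ∈ range (n + 1), T k * H k = C * ∑ k ∈ range (n + 1), T k := by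
  have hreflect :
      ∑ k ∈ range (n + 1), T k * H k = ∑ k ∈ range (n + 1), (2 * C * T k - T k * H k) := by
    rw [← sum_range_reflect]
    refine sum_congr rfl fun k hk => ?_
    have hkn : k ≤ n := Nat.lt_succ_iff.mp (mem_range.mp hk)
    rw [Nat.add_sub_cancel, hT k hkn, hH k hkn]
    ring
  rw [sum_sub_distrib, ← mul_sum] at hreflect
  linear_combination hreflect / 2

theorem sum_pochhammer_ratio_mul_shiftedHarmonic {a b : K} {n : ℕ} (hab : a + b = 1 - n)
    (hb : (ascPochhammer K n).eval b ≠ 0) :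
    ∑ k ∈ range (n + 1),
        (ascPochhammer K k).eval (-(n : K)) * ((ascPochhammer K k).eval a) ^ 3 /
            ((ascPochhammer K k).eval 1 * ((ascPochhammer K k).eval b) ^ 3) *
          (shiftedHarmonic b k - shiftedHarmonic a k) =
      shiftedHarmonic b n *
        ∑ k ∈ range (n + 1),
          (ascPochhammer K k).eval (-(n : K)) * ((ascPochhammer K k).eval a) ^ 3 /
            ((ascPochhammer K k).eval 1 * ((ascPochhammer K k).eval b) ^ 3) := by
  have hba : b + a = 1 - n := by rwa [add_comm]
  have hn1 : -(n : K) + 1 = 1 - n := by ring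
  have h1 : (ascPochhammer K n).eval 1 ≠ 0 := by
    rw [ascPochhammer_eval_one]
    exact Nat.cast_ne_zero.mpr n.factorial_ne_zero
  refine sum_range_mul_eq_of_reflect (fun k hk => ?_) (fun k hk => ?_)
  · simp only [mul_div_mul_comm _ (_ ^ 3), ← div_pow]
    rw [ascPochhammer_eval_div_reflect hn1 h1 hk, ascPochhammer_eval_div_reflect hab hb hk]
    linear_combination ((ascPochhammer K k).eval (-(n : K)) / (ascPochhammer K k).eval 1) *
      ((ascPochhammer K k).eval a / (ascPochhammer K k).eval b) ^ 3 * (((-1 : K) ^ n) ^ 2 + 1) *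
      neg_one_pow_sq (M := K) n
  · have hsum := shiftedHarmonic_reflect hab (Nat.zero_le n)
    rw [Nat.sub_zero, shiftedHarmonic_zero, zero_sub] at hsum
    rw [shiftedHarmonic_reflect hab hk, shiftedHarmonic_reflect hba hk, hsum]
    ring

end Symmetrization

/-- Lemma 2.6: For an integer `r ≤ 1` coprime with `3`, the exact identity
`Σ_{k=0}^{1-r} (r-1)_k (r/3)_k³/((1)_k (2r/3)_k³) (Σ_{j=0}^{k-1} 1/(2r/3+j) - Σ_{j=0}^{k-1} 1/(r/3+j))
 = (Σ_{j=0}^{-r} 1/(2r/3+j)) Σ_{k=0}^{1-r} (r-1)_k (r/3)_k³/((1)_k (2r/3)_k³)` holds in `ℚ`. -/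
theorem stmt4 (r : ℤ) (hr : r ≤ 1) (hr3 : IsCoprime r 3) :
    ∑ k ∈ Finset.range ((1 - r).toNat + 1),
        (ascPochhammer ℚ k).eval ((r : ℚ) - 1) * ((ascPochhammer ℚ k).eval ((r : ℚ) / 3)) ^ 3 /
            ((ascPochhammer ℚ k).eval 1 * ((ascPochhammer ℚ k).eval (2 * (r : ℚ) / 3)) ^ 3) *
          ((∑ j ∈ Finset.range k, 1 / (2 * (r : ℚ) / 3 + (j : ℚ))) -
            ∑ j ∈ Finset.range k, 1 / ((r : ℚ) / 3 + (j : ℚ))) =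
      (∑ j ∈ Finset.range ((1 - r).toNat), 1 / (2 * (r : ℚ) / 3 + (j : ℚ))) *
        ∑ k ∈ Finset.range ((1 - r).toNat + 1),
          (ascPochhammer ℚ k).eval ((r : ℚ) - 1) * ((ascPochhammer ℚ k).eval ((r : ℚ) / 3)) ^ 3 /
            ((ascPochhammer ℚ k).eval 1 * ((ascPochhammer ℚ k).eval (2 * (r : ℚ) / 3)) ^ 3) := by
  set n := (1 - r).toNat
  have hn : (n : ℚ) = 1 - r := by
    rw [← Int.cast_natCast, Int.toNat_of_nonneg (by omega)]
    push_cast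
    ring
  have h3 : ¬ (3 : ℤ) ∣ r := fun hdvd => by
    have := Int.isUnit_iff.mp (hr3.isUnit_of_dvd' hdvd dvd_rfl)
    omega
  have hb : (ascPochhammer ℚ n).eval (2 * (r : ℚ) / 3) ≠ 0 := by
    rw [Ne, ascPochhammer_eval_eq_zero_iff]
    rintro ⟨j, -, hj⟩
    have hjQ : (3 * j : ℚ) = -(2 * r) := by linear_combination 3 * hj
    have : (3 * j : ℤ) = -(2 * r) := by exact_mod_cast hjQ
    omega
  have hab : (r : ℚ) / 3 + 2 * (r : ℚ) / 3 = 1 - n := by rw [hn]; ring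
  rw [show (r : ℚ) - 1 = -(n : ℚ) by rw [hn]; ring]
  exact sum_pochhammer_ratio_mul_shiftedHarmonic hab hb
end

section
/- Let r ≤ 1 be an integer coprime with 3 and p > 3 a prime with p ≡ -r (mod 3) and p ≥ 3 - r. Then Σ_{j=0}^{(p-2r-3)/3} 1/(2r/3+j) + Σ_{j=1}^{(p+r-3)/3} 1/j - Σ_{j=0}^{-r} 1/(2r/3+j) ≡ 0 (mod p), as p-adic integers. -/
/-!
Reduce modulo `p` through `toZMod : ℤ_[p] → ZMod p`, which sends `Ring.inverse` to the field
inverse (non-units go to `0` on both sides). With `y = r/3` and `n = 1 - r` we have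
`a + 1 = n + b` and `2y + (a + 1) = p/3 = 0`, so for `n ≤ j ≤ a` the term `1/(2y + j)` equals
`-1/(a + 1 - j)`. The first sum thus splits into the third sum plus `-(1 + 1/2 + ⋯ + 1/b)`,
which cancels the second.
-/

open Finset

theorem map_ringInverse_of_map_nonunit_eq_zero {M₀ G₀ F : Type*} [MonoidWithZero M₀]
    [GroupWithZero G₀] [FunLike F M₀ G₀] [MonoidWithZeroHomClass F M₀ G₀] (f : F)
    (hf : ∀ z, ¬IsUnit z → f z = 0) (z : M₀) : f (Ring.inverse z) = (f z)⁻¹ := by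
  by_cases hz : IsUnit z
  · refine eq_inv_of_mul_eq_one_left ?_
    rw [← map_mul, Ring.inverse_mul_cancel z hz, map_one]
  · rw [Ring.inverse_non_unit z hz, map_zero, hf z hz, inv_zero]

namespace PadicInt

variable {p : ℕ} [Fact p.Prime]

theorem toZMod_ringInverse (z : ℤ_[p]) : toZMod (Ring.inverse z) = (toZMod z)⁻¹ :=
  map_ringInverse_of_map_nonunit_eq_zero toZMod (fun w hw ↦ by
    rwa [← RingHom.mem_ker, ker_toZMod, IsLocalRing.mem_maximalIdeal, mem_nonunits_iff]) z

theorem toZMod_eq_zero_iff_dvd {z : ℤ_[p]} : toZMod z = 0 ↔ (p : ℤ_[p]) ∣ z := by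
  rw [← RingHom.mem_ker, ker_toZMod, maximalIdeal_eq_span_p, Ideal.mem_span_singleton]

end PadicInt

section Reflection

variable {K : Type*} [DivisionRing K]

theorem sum_range_inv_add_eq_neg_sum_Icc_inv (c : K) (b : ℕ) (h : c + b = 0) :
    ∑ k ∈ range b, (c + k)⁻¹ = -∑ m ∈ Icc 1 b, (m : K)⁻¹ := by
  induction b generalizing c with
  | zero => simp
  | succ b ih =>
    have hshift : ∑ k ∈ range b, (c + (k + 1 : ℕ))⁻¹ = -∑ m ∈ Icc 1 b, (m : K)⁻¹ := by
      rw [← ih (c + 1) (by rwa [add_assoc, add_comm 1, ← Nat.cast_succ])]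
      refine sum_congr rfl fun k _ ↦ ?_
      push_cast
      rw [add_assoc, add_comm (k : K)]
    rw [sum_range_succ', sum_Icc_succ_top (by omega), hshift, Nat.cast_zero, add_zero,
      eq_neg_of_add_eq_zero_left h, inv_neg]
    abel

theorem sum_range_inv_add_add_sum_Icc_inv_sub_sum_range_inv_add_eq_zero (c : K) (n b : ℕ)
    (h : c + (n + b : ℕ) = 0) :
    ∑ j ∈ range (n + b), (c + j)⁻¹ + ∑ m ∈ Icc 1 b, (m : K)⁻¹ - ∑ j ∈ range n, (c + j)⁻¹ = 0 := by
  have hshift : ∑ k ∈ range b, (c + (n + k : ℕ))⁻¹ = -∑ m ∈ Icc 1 b, (m : K)⁻¹ := by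
    simpa only [Nat.cast_add, add_assoc] using
      sum_range_inv_add_eq_neg_sum_Icc_inv (c + n) b (by simpa [add_assoc] using h)
  rw [sum_range_add, hshift]
  abel

end Reflection

theorem stmt5_general (p : ℕ) [Fact p.Prime] (hp3 : 3 < p)
    (r : ℤ) (hr : r ≤ 1)
    (a b : ℕ) (ha : (a : ℤ) * 3 = p - 2 * r - 3) (hb : (b : ℤ) * 3 = p + r - 3)
    (x : PadicInt p) (hx : 3 * x = (r : PadicInt p)) :
    (p : PadicInt p) ∣
      (∑ j ∈ Finset.range (a + 1), Ring.inverse (2 * x + (j : PadicInt p))) +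
        (∑ j ∈ Finset.Icc 1 b, Ring.inverse ((j : PadicInt p))) -
        ∑ j ∈ Finset.range ((1 - r).toNat), Ring.inverse (2 * x + (j : PadicInt p)) := by
  have h3 : (3 : ZMod p) ≠ 0 := by
    rw [← Nat.cast_ofNat, Ne, ZMod.natCast_eq_zero_iff]
    exact fun hdvd ↦ absurd (Nat.le_of_dvd three_pos hdvd) (by omega)
  have hy : 3 * PadicInt.toZMod x = r := by
    rw [← map_ofNat PadicInt.toZMod, ← map_mul, hx, map_intCast]
  have hcenter : 3 * (2 * PadicInt.toZMod x + (a + 1 : ℕ)) = 0 := by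
    have := congrArg (Int.cast : ℤ → ZMod p) ha
    push_cast [ZMod.natCast_self] at this ⊢
    linear_combination 2 * hy + this
  have hab : a + 1 = (1 - r).toNat + b := by omega
  rw [← PadicInt.toZMod_eq_zero_iff_dvd]
  simp only [map_sub, map_add, map_sum, PadicInt.toZMod_ringInverse, map_mul, map_natCast,
    map_ofNat]
  rw [hab] at hcenter ⊢
  exact sum_range_inv_add_add_sum_Icc_inv_sub_sum_range_inv_add_eq_zero _ _ _
    ((mul_eq_zero.mp hcenter).resolve_left h3)

/-- Lemma 2.7: Under the hypotheses of Theorem 1.1, with `a = (p-2r-3)/3`,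
`b = (p+r-3)/3` and `x = r/3 ∈ ℤ_p`,
`Σ_{j=0}^{(p-2r-3)/3} 1/(2r/3+j) + Σ_{j=1}^{(p+r-3)/3} 1/j - Σ_{j=0}^{-r} 1/(2r/3+j) ≡ 0 (mod p)`. -/
theorem stmt5 (p : ℕ) [Fact p.Prime] (hp3 : 3 < p)
    (r : ℤ) (hr : r ≤ 1) (hr3 : IsCoprime r 3)
    (hpr : (p : ℤ) ≡ -r [ZMOD 3]) (hpge : 3 - r ≤ (p : ℤ))
    (a b : ℕ) (ha : (a : ℤ) * 3 = p - 2 * r - 3) (hb : (b : ℤ) * 3 = p + r - 3)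
    (x : PadicInt p) (hx : 3 * x = (r : PadicInt p)) :
    (p : PadicInt p) ∣
      (∑ j ∈ Finset.range (a + 1), Ring.inverse (2 * x + (j : PadicInt p))) +
        (∑ j ∈ Finset.Icc 1 b, Ring.inverse ((j : PadicInt p))) -
        ∑ j ∈ Finset.range ((1 - r).toNat), Ring.inverse (2 * x + (j : PadicInt p)) :=
  stmt5_general p hp3 r hr a b ha hb x hx
end

section
/- Let r ≤ 1 be an odd integer coprime with 5 and p an odd prime with p ≡ 2r (mod 5), p ≥ (5-r)/2. Then ((r/5)_{(3p-r)/5})⁵/((1)_{(3p-r)/5})⁵ ≡ 1 (mod p) in ℤ_p. -/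
open Finset Polynomial

private lemma asc_eval_prod {K : Type*} [CommRing K] (n : ℕ) (y : K) :
    (ascPochhammer K n).eval y = ∏ i ∈ Finset.range n, (y + i) := by
  induction n with
  | zero => simp
  | succ m ih => rw [ascPochhammer_succ_eval, ih, Finset.prod_range_succ]

/-- For `r ≤ 1` odd and coprime with `5`, and an odd prime `p ≡ 2r (mod 5)` with
`p ≥ (5-r)/2`, with `n = (3p-r)/5` and `x = r/5 ∈ ℤ_p`, one has
`((r/5)_n)⁵/((1)_n)⁵ ≡ 1 (mod p)`. -/
theorem stmt8 (p : ℕ) [Fact p.Prime] (hp : Odd p)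
    (r : ℤ) (hr : r ≤ 1) (hrodd : Odd r) (hr5 : IsCoprime r 5)
    (hpr : (p : ℤ) ≡ 2 * r [ZMOD 5]) (hpge : 5 - r ≤ 2 * (p : ℤ))
    (n : ℕ) (hn : (n : ℤ) * 5 = 3 * p - r)
    (x : PadicInt p) (hx : 5 * x = (r : PadicInt p)) :
    (p : PadicInt p) ∣
      ((ascPochhammer (PadicInt p) n).eval x) ^ 5 *
        (Ring.inverse ((ascPochhammer (PadicInt p) n).eval 1)) ^ 5 - 1 := by
  have hpp : p.Prime := Fact.out
  -- p ≠ 5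
  have hp5 : p ≠ 5 := by
    rintro rfl
    have h5 : (5 : ℤ) ∣ r := by
      have h1 : (5 : ℤ) ∣ 2 * r - 5 := hpr.dvd
      have h2 : (5 : ℤ) ∣ 2 * r := by omega
      omega
    have := hr5.isUnit_of_dvd' h5 dvd_rfl
    rw [Int.isUnit_iff] at this
    omega
  -- n even
  have hneven : Even n := by
    have h1 : Even ((n : ℤ) * 5) := by
      rw [hn]
      rcases hp with ⟨k, hk⟩
      rcases hrodd with ⟨m, hm⟩
      exact ⟨3 * k - m + 1, by push_cast [hk, hm]; ring⟩
    rcases Int.even_mul.mp h1 with h | h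
    · exact Int.even_coe_nat n |>.mp h
    · rw [Int.even_iff] at h; omega
  -- n < p
  have hnp : n < p := by
    have : (n : ℤ) < p := by nlinarith [hpp.two_le, (by exact_mod_cast hpp.two_le : (2:ℤ) ≤ p)]
    exact_mod_cast this
  -- the residue map
  set φ : PadicInt p →+* ZMod p := PadicInt.toZMod with hφ
  have hker : ∀ z : PadicInt p, (p : PadicInt p) ∣ z ↔ φ z = 0 := by
    intro z
    rw [← Ideal.mem_span_singleton, ← PadicInt.maximalIdeal_eq_span_p,
      ← PadicInt.ker_toZMod, RingHom.mem_ker]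
  -- image of eval
  have heval : ∀ z : PadicInt p, φ ((ascPochhammer (PadicInt p) n).eval z)
      = (ascPochhammer (ZMod p) n).eval (φ z) := by
    intro z
    rw [← ascPochhammer_map φ, Polynomial.eval_map, Polynomial.eval₂_at_apply]
  set y : ZMod p := φ x with hy
  have h5y : 5 * y = (r : ZMod p) := by
    have := congrArg φ hx
    simpa [map_ofNat] using this
  have h5e : (5 : ZMod p) ≠ 0 := by
    have hnd : ¬ (p ∣ 5) := fun h =>
      hp5 ((Nat.prime_dvd_prime_iff_eq hpp (by norm_num)).mp h)
    intro h0
    have h1 : ((5 : ℕ) : ZMod p) = 0 := by exact_mod_cast h0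
    exact hnd ((ZMod.natCast_eq_zero_iff 5 p).mp h1)
  -- 5 * n = -r in ZMod p
  have h5n : (5 : ZMod p) * n = -(r : ZMod p) := by
    have := congrArg (fun z : ℤ => (z : ZMod p)) hn
    push_cast at this
    rw [ZMod.natCast_self] at this
    linear_combination this
  -- key termwise identity
  have hterm : ∀ i ∈ Finset.range n, y + (i : ZMod p) = -(((n - i : ℕ) : ZMod p)) := by
    intro i hi
    have hi' : i ≤ n := le_of_lt (Finset.mem_range.mp hi)
    have hc : ((n - i : ℕ) : ZMod p) = (n : ZMod p) - i := by
      push_cast [Nat.cast_sub hi']; ring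
    have h5 : (5 : ZMod p) * (y + i) = (5 : ZMod p) * (-(((n - i : ℕ) : ZMod p))) := by
      rw [hc]
      have : (5:ZMod p) * (y + i) = r + 5 * i := by rw [mul_add, h5y]
      rw [this]
      have : (5:ZMod p) * -((n:ZMod p) - i) = -(5 * n) + 5 * i := by ring
      rw [this, h5n]; ring
    exact mul_left_cancel₀ h5e h5
  -- eval at y equals eval at 1
  have hprod : (ascPochhammer (ZMod p) n).eval y = (ascPochhammer (ZMod p) n).eval 1 := by
    rw [asc_eval_prod, asc_eval_prod, Finset.prod_congr rfl hterm]
    have h1 : ∀ i ∈ Finset.range n, -(((n - i : ℕ) : ZMod p))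
        = (fun j : ℕ => -((j + 1 : ℕ) : ZMod p)) (n - 1 - i) := by
      intro i hi
      have hi' : i < n := Finset.mem_range.mp hi
      congr 2
      omega
    rw [Finset.prod_congr rfl h1, Finset.prod_range_reflect (fun j : ℕ => -((j + 1 : ℕ) : ZMod p)) n]
    have : ∀ i ∈ Finset.range n, -((i + 1 : ℕ) : ZMod p) = (-1) * ((1 : ZMod p) + i) := by
      intro i _; push_cast; ring
    rw [Finset.prod_congr rfl this, Finset.prod_mul_distrib, Finset.prod_const,
      Finset.card_range, hneven.neg_one_pow, one_mul]
  -- (1)_n is a unit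
  have hBne : φ ((ascPochhammer (PadicInt p) n).eval 1) ≠ 0 := by
    rw [heval, map_one, ascPochhammer_eval_one]
    rw [Ne, ZMod.natCast_eq_zero_iff]
    exact fun h => absurd ((Nat.Prime.dvd_factorial hpp).mp h) (Nat.not_le.mpr hnp)
  have hBunit : IsUnit ((ascPochhammer (PadicInt p) n).eval 1) := by
    rw [PadicInt.isUnit_iff]
    refine le_antisymm (PadicInt.norm_le_one _) ?_
    by_contra h
    push_neg at h
    exact hBne ((hker _).mp ((PadicInt.norm_lt_one_iff_dvd _).mp h))
  -- conclude
  rw [hker]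
  have hinv : φ ((ascPochhammer (PadicInt p) n).eval 1) *
      φ (Ring.inverse ((ascPochhammer (PadicInt p) n).eval 1)) = 1 := by
    rw [← map_mul, Ring.mul_inverse_cancel _ hBunit, map_one]
  have hA : φ ((ascPochhammer (PadicInt p) n).eval x)
      = φ ((ascPochhammer (PadicInt p) n).eval 1) := by
    rw [heval, heval, map_one, ← hy, hprod]
  rw [map_sub, map_mul, map_pow, map_pow, map_one, hA, ← mul_pow, hinv, one_pow, sub_self]
end

section
/- Let p be an odd prime and x a p-adic integer. Then Γ_p(x)·Γ_p(1-x) = (-1)^{⟨-x⟩_p - 1}, where ⟨-x⟩_p ∈ {0,1,...,p-1} is the least nonnegative residue of -x modulo p. -/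
/-!
Both sides are continuous in `x` (the right side factors through `ℤ_p → ℤ/p`), and both get
multiplied by `1` or `-1`, according as `p ∣ x` or not, when `x` is replaced by `x + 1`. For the
left side this is the functional equation `Γ_p(x + 1) = -h_p(x) Γ_p(x)`, itself obtained from the
values on positive integers by density. For the right side, `⟨-(x + 1)⟩_p = ⟨-x⟩_p - 1` unless
`p ∣ x`, where it jumps from `0` to `p - 1`, an even number. Both sides equal `-1` at `0`, hence
agree on `ℕ`, which is dense in `ℤ_p`.
-/

open Finset

lemma ZMod.neg_one_pow_val_neg_add_one {R : Type*} [Ring R] {p : ℕ} [Fact (1 < p)] (hp : Odd p)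
    (a : ZMod p) :
    (-1 : R) ^ ((-(a + 1)).val + 1) = (if a = 0 then 1 else -1) * (-1) ^ ((-a).val + 1) := by
  have hp1 : 1 ≤ p := (Fact.out : 1 < p).le
  split_ifs with ha
  · rw [ha, zero_add, ZMod.neg_val, if_neg one_ne_zero, ZMod.val_one, Nat.sub_add_cancel hp1,
      hp.neg_one_pow]
    simp
  · obtain ⟨k, hk⟩ : ∃ k, (-a).val = k + 1 :=
      Nat.exists_eq_add_one.mpr (Nat.pos_of_ne_zero ((ZMod.val_ne_zero _).mpr (neg_ne_zero.mpr ha)))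
    have hval : (-(a + 1)).val = k := by
      rw [neg_add, ← sub_eq_add_neg, ZMod.val_sub (by rw [ZMod.val_one, hk]; omega), hk,
        ZMod.val_one, Nat.add_sub_cancel]
    rw [hval, hk, pow_succ _ (k + 1), neg_one_mul, mul_neg_one, neg_neg]

namespace PadicInt

variable {p : ℕ} [Fact p.Prime]

lemma appr_one_eq_val_toZMod (x : ℤ_[p]) : x.appr 1 = (toZMod x).val := by
  rw [val_toZMod_eq_zmodRepr]
  refine (zmodRepr_unique _ _ (by simpa using x.appr_lt 1) ?_).symm
  simpa [maximalIdeal_eq_span_p] using x.appr_spec 1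

lemma continuous_toZMod : Continuous (toZMod : ℤ_[p] → ZMod p) := by
  refine continuous_discrete_rng.mpr fun a => Metric.isOpen_iff.mpr fun x hx => ⟨1, one_pos, ?_⟩
  intro y hy
  have hyx : y - x ∈ IsLocalRing.maximalIdeal ℤ_[p] := by
    rw [IsLocalRing.mem_maximalIdeal, mem_nonunits, ← dist_eq_norm]
    exact hy
  rw [← ker_toZMod, RingHom.mem_ker, map_sub, sub_eq_zero] at hyx
  rwa [Set.mem_preimage, hyx]

lemma denseRange_natCast_add_one : DenseRange (fun n : ℕ => (n : ℤ_[p]) + 1) :=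
  (Homeomorph.addRight (1 : ℤ_[p])).surjective.denseRange.comp denseRange_natCast
    (continuous_add_const 1)

theorem ext_of_apply_add_one {R : Type*} [TopologicalSpace R] [T2Space R] [Mul R]
    {f g c : ℤ_[p] → R} (hf : Continuous f) (hg : Continuous g) (h0 : f 0 = g 0)
    (hf1 : ∀ x, f (x + 1) = c x * f x) (hg1 : ∀ x, g (x + 1) = c x * g x) : f = g := by
  refine Continuous.ext_on denseRange_natCast hf hg ?_
  rintro _ ⟨n, rfl⟩
  induction n with
  | zero => simpa using h0
  | succ n ih => rw [Nat.cast_succ, hf1, hg1, ih]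

/-- Morita's `h_p`: the identity on units, `1` on `pℤ_p` (the kernel of `toZMod`). -/
noncomputable def unitOrOne (x : ℤ_[p]) : ℤ_[p] := if toZMod x = 0 then 1 else x

lemma continuous_unitOrOne : Continuous (unitOrOne : ℤ_[p] → ℤ_[p]) := by
  have hclopen : IsClopen {x : ℤ_[p] | toZMod x = 0} :=
    (isClopen_discrete {(0 : ZMod p)}).preimage continuous_toZMod
  exact continuous_const.if (by simp [hclopen.frontier_eq]) continuous_id

lemma unitOrOne_natCast (n : ℕ) : unitOrOne (n : ℤ_[p]) = if p ∣ n then 1 else (n : ℤ_[p]) := by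
  simp [unitOrOne, ZMod.natCast_eq_zero_iff]

lemma unitOrOne_neg (x : ℤ_[p]) : unitOrOne (-x) = if toZMod x = 0 then 1 else -x := by
  simp [unitOrOne]


lemma prod_filter_not_dvd_succ {n : ℕ} (hn : 1 ≤ n) :
    ∏ j ∈ (Ico 1 (n + 1)).filter (fun j => ¬ p ∣ j), (j : ℤ_[p]) =
      unitOrOne (n : ℤ_[p]) * ∏ j ∈ (Ico 1 n).filter (fun j => ¬ p ∣ j), (j : ℤ_[p]) := by
  rw [prod_filter, prod_filter, prod_Ico_succ_top hn, mul_comm, unitOrOne_natCast, ite_not]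

variable {G : ℤ_[p] → ℤ_[p]}

theorem apply_add_one_eq_neg_unitOrOne_mul (hGc : Continuous G)
    (hGval : ∀ n : ℕ, 0 < n →
      G n = (-1) ^ n * ∏ j ∈ (Ico 1 n).filter (fun j => ¬ p ∣ j), (j : ℤ_[p]))
    (x : ℤ_[p]) : G (x + 1) = -unitOrOne x * G x := by
  suffices (fun x => G (x + 1)) = fun x => -unitOrOne x * G x from congrFun this x
  refine Continuous.ext_on denseRange_natCast_add_one (by fun_prop)
    (continuous_unitOrOne.neg.mul hGc) ?_
  rintro _ ⟨n, rfl⟩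
  simp only [← Nat.cast_add_one]
  rw [hGval _ (by omega), hGval _ (by omega), prod_filter_not_dvd_succ (by omega), pow_succ]
  ring

theorem apply_mul_apply_one_sub_add_one (hG : ∀ x, G (x + 1) = -unitOrOne x * G x) (x : ℤ_[p]) :
    G (x + 1) * G (1 - (x + 1)) = (if toZMod x = 0 then 1 else -1) * (G x * G (1 - x)) := by
  have hneg := hG (-x)
  rw [neg_add_eq_sub, unitOrOne_neg] at hneg
  rw [sub_add_cancel_right, hG, hneg, unitOrOne]
  split_ifs <;> ring

end PadicInt

open PadicInt in
/-- reflection formula for Morita's p-adic Gamma function: for an odd prime `p`,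
any continuous `G : ℤ_p → ℤ_p` with `G n = (-1)ⁿ ∏_{0<j<n, p∤j} j` for positive integers `n`
(i.e. Morita's p-adic Gamma function), and any `x ∈ ℤ_p`,
`Γ_p(x) Γ_p(1-x) = (-1)^{⟨-x⟩_p - 1}` (written as `(-1)^{⟨-x⟩_p + 1}`). -/
theorem stmt10 (p : ℕ) [Fact p.Prime] (hp : Odd p)
    (G : PadicInt p → PadicInt p) (hGc : Continuous G)
    (hGval : ∀ n : ℕ, 0 < n →
      G n = (-1) ^ n * ∏ j ∈ (Finset.Ico 1 n).filter (fun j => ¬ p ∣ j), (j : PadicInt p))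
    (x : PadicInt p) :
    G x * G (1 - x) = (-1) ^ ((-x).appr 1 + 1) := by
  have hG := apply_add_one_eq_neg_unitOrOne_mul hGc hGval
  have hG1 : G 1 = -1 := by simpa using hGval 1 one_pos
  have hG0 : G 0 = 1 := by simpa [hG1, unitOrOne] using (hG 0).symm
  suffices (fun x => G x * G (1 - x)) = fun x => (-1) ^ ((-x).appr 1 + 1) from congrFun this x
  simp_rw [appr_one_eq_val_toZMod, map_neg]
  refine ext_of_apply_add_one (c := fun x => if toZMod x = 0 then 1 else -1) (by fun_prop)
    ((continuous_of_discreteTopology (f := fun a : ZMod p => (-1 : ℤ_[p]) ^ ((-a).val + 1))).comp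
      continuous_toZMod) ?_ (apply_mul_apply_one_sub_add_one hG) ?_
  · simp [hG0, hG1]
  · intro y
    simpa using ZMod.neg_one_pow_val_neg_add_one (R := ℤ_[p]) hp (toZMod y)
end
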